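/- Let H : T*Q × g → ℝ satisfy the partial G-invariance H(g·q, g·p, ξ) = H(q, p, ξ) for all g ∈ G. If t ↦ (q(t), p(t), ξ(t)) solves the Clebsch–Hamilton equations (dp/Dt = −∂H/∂q − K̄(ξ·p), q̇ + ξ·q = ∂H/∂p, and J(q,p) = ∂H/∂ξ), then the curve μ(t) = J(q(t), p(t)) ∈ g* satisfies the Euler–Poincaré equation dμ/dt = −coad_{ξ(t)} μ(t). -/

import Mathlib

/-!
Differentiate `⟨μ, ζ⟩ = ⟨p, ζ·q⟩` along the curve. The connector identity
`⟨p, ∇_v ζ_*⟩ = -⟨K̄(ζ·p), v⟩` turns the derivative of the fundamental vector field into a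
`K̄`-term, the infinitesimal invariance of `H` cancels the two terms coming from `H`, and the
equivariance of `J` turns the remaining pair of `K̄`-terms into `⟨μ, ⁅ξ, ζ⁆⟩`.
-/

theorem HasDerivAt.clm_apply_comp {𝕜 U V W : Type*} [NontriviallyNormedField 𝕜]
    [NormedAddCommGroup U] [NormedSpace 𝕜 U] [NormedAddCommGroup V] [NormedSpace 𝕜 V]
    [NormedAddCommGroup W] [NormedSpace 𝕜 W] {p : 𝕜 → V →L[𝕜] W} {p' : V →L[𝕜] W}
    {q : 𝕜 → U} {q' : U} {f : U → V} {t : 𝕜}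
    (hp : HasDerivAt p p' t) (hq : HasDerivAt q q' t) (hf : DifferentiableAt 𝕜 f (q t)) :
    HasDerivAt (fun s => p s (f (q s))) (p' (f (q t)) + p t (fderiv 𝕜 f (q t) q')) t :=
  hp.clm_apply (hf.hasFDerivAt.comp_hasDerivAt t hq)

section MomentumMap

variable {V 𝔤 : Type*} [NormedAddCommGroup V] [NormedSpace ℝ V]
    [TopologicalSpace 𝔤] [LieRing 𝔤] [LieAlgebra ℝ 𝔤]
    {a : V → 𝔤 →L[ℝ] V} {Kb : V → (V →L[ℝ] ℝ) → 𝔤 → (V →L[ℝ] ℝ)}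

theorem momentum_bracket_eq_connector_sub
    (hJeq : ∀ (q : V) (p : V →L[ℝ] ℝ) (ξ ζ : 𝔤),
      Kb q p ζ (a q ξ) - Kb q p ξ (a q ζ) = - p (a q ⁅ζ, ξ⁆))
    (q : V) (p : V →L[ℝ] ℝ) (ξ ζ : 𝔤) :
    p (a q ⁅ξ, ζ⁆) = Kb q p ζ (a q ξ) - Kb q p ξ (a q ζ) := by
  rw [hJeq, ← lie_skew, map_neg, map_neg]

/-- The derivative of `⟨J(q,p), ζ⟩` along the Clebsch–Hamilton vector field at `(q, p, ξ)`. -/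
theorem clebsch_momentum_deriv_eq_bracket {DHq : V → (V →L[ℝ] ℝ) → 𝔤 → (V →L[ℝ] ℝ)}
    {DHp : V → (V →L[ℝ] ℝ) → 𝔤 → V}
    (hK : ∀ (q : V) (p : V →L[ℝ] ℝ) (ζ : 𝔤) (v : V),
      p (fderiv ℝ (fun q' => a q' ζ) q v) + Kb q p ζ v = 0)
    (hinv : ∀ (q : V) (p : V →L[ℝ] ℝ) (ξ ζ : 𝔤),
      DHq q p ξ (a q ζ) + Kb q p ζ (DHp q p ξ) = 0)
    (hJeq : ∀ (q : V) (p : V →L[ℝ] ℝ) (ξ ζ : 𝔤),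
      Kb q p ζ (a q ξ) - Kb q p ξ (a q ζ) = - p (a q ⁅ζ, ξ⁆))
    (q : V) (p : V →L[ℝ] ℝ) (ξ ζ : 𝔤) :
    (-(DHq q p ξ) - Kb q p ξ) (a q ζ) + p (fderiv ℝ (fun q' => a q' ζ) q (DHp q p ξ - a q ξ))
      = p (a q ⁅ξ, ζ⁆) := by
  have hconn := hK q p ζ (DHp q p ξ - a q ξ)
  rw [map_sub (Kb q p ζ)] at hconn
  rw [momentum_bracket_eq_connector_sub hJeq, sub_apply, neg_apply]
  linear_combination hconn - hinv q p ξ ζ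

end MomentumMap

/-- In the trivialization `T*Q = V × V*`, `a q ξ` is the fundamental vector field `ξ·q`, so
`p (a q ζ) = ⟨J(q, p), ζ⟩`; `Kb q p ζ` is `K̄(ζ·p)`, and `DHq`, `DHp` play the partial
derivatives `∂H/∂q`, `∂H/∂p`. -/
theorem momentum_map_euler_poincare_general
    {V 𝔤 : Type*} [NormedAddCommGroup V] [NormedSpace ℝ V]
    [NormedAddCommGroup 𝔤] [LieRing 𝔤] [LieAlgebra ℝ 𝔤]
    (a : V → 𝔤 →L[ℝ] V)
    (Kb : V → (V →L[ℝ] ℝ) → 𝔤 → (V →L[ℝ] ℝ))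
    (DHq : V → (V →L[ℝ] ℝ) → 𝔤 → (V →L[ℝ] ℝ))
    (DHp : V → (V →L[ℝ] ℝ) → 𝔤 → V)
    (ha : ∀ ζ : 𝔤, Differentiable ℝ (fun q' => a q' ζ))
    -- `⟨p, ∇_v ζ_*⟩ + ⟨K̄(ζ·p), v⟩ = 0`
    (hK : ∀ (q : V) (p : V →L[ℝ] ℝ) (ζ : 𝔤) (v : V),
        p (fderiv ℝ (fun q' => a q' ζ) q v) + Kb q p ζ v = 0)
    -- infinitesimal `G`-invariance of `H` in the sense `H(g·q, g·p, ξ) = H(q, p, ξ)`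
    (hinv : ∀ (q : V) (p : V →L[ℝ] ℝ) (ξ ζ : 𝔤),
        DHq q p ξ (a q ζ) + Kb q p ζ (DHp q p ξ) = 0)
    -- equivariance identity of the momentum map
    (hJeq : ∀ (q : V) (p : V →L[ℝ] ℝ) (ξ ζ : 𝔤),
        Kb q p ζ (a q ξ) - Kb q p ξ (a q ζ) = - p (a q ⁅ζ, ξ⁆))
    -- a solution curve of the Clebsch–Hamilton equations
    (q : ℝ → V) (p : ℝ → V →L[ℝ] ℝ) (ξ : ℝ → 𝔤)
    (heq1 : ∀ t, HasDerivAt p (-(DHq (q t) (p t) (ξ t)) - Kb (q t) (p t) (ξ t)) t)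
    (heq2 : ∀ t, HasDerivAt q (DHp (q t) (p t) (ξ t) - a (q t) (ξ t)) t) :
    ∀ (t : ℝ) (ζ : 𝔤),
      HasDerivAt (fun s => p s (a (q s) ζ)) (p t (a (q t) ⁅ξ t, ζ⁆)) t := by
  intro t ζ
  exact ((heq1 t).clm_apply_comp (heq2 t) (ha ζ (q t))).congr_deriv
    (clebsch_momentum_deriv_eq_bracket hK hinv hJeq _ _ _ _)

/-- **The momentum map satisfies the Euler–Poincaré equation along Clebsch–Hamilton
solutions** (for a partially `G`-invariant Hamiltonian, `H(g·q, g·p, ξ) = H(q, p, ξ)`).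

Work in a trivialization `T*Q = Q × V*` (flat connection, `Q = V`), with fundamental
vector field `ξ · q = a q ξ` and momentum map `⟨J(q,p), ζ⟩ = p (a q ζ)`.  The data
`Kb q p ζ = K̄(ζ·p)` (connector of the dual connection applied to the fundamental vector
field on `T*Q`) satisfies `⟨p, ∇_v ζ_*⟩ + ⟨K̄(ζ·p), v⟩ = 0`, and the infinitesimal version
of the `G`-invariance of `H` and the equivariance identity of `J` hold.  If
`(q(t), p(t), ξ(t))` solves the Clebsch–Hamilton equations
`dp/dt = −∂H/∂q − K̄(ξ·p)`, `q̇ + ξ·q = ∂H/∂p`, `J(q,p) = ∂H/∂ξ`,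
then `μ(t) = J(q(t), p(t))` satisfies the Euler–Poincaré equation
`dμ/dt = −coad_{ξ(t)} μ`, i.e. `d/dt ⟨μ, ζ⟩ = ⟨μ, ⁅ξ, ζ⁆⟩` for all `ζ ∈ 𝔤`. -/
theorem momentum_map_euler_poincare
    {V 𝔤 : Type*} [NormedAddCommGroup V] [NormedSpace ℝ V]
    [NormedAddCommGroup 𝔤] [NormedSpace ℝ 𝔤] [LieRing 𝔤] [LieAlgebra ℝ 𝔤]
    (H : V × (V →L[ℝ] ℝ) × 𝔤 → ℝ)
    (a : V → 𝔤 →L[ℝ] V)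
    (Kb : V → (V →L[ℝ] ℝ) → 𝔤 → (V →L[ℝ] ℝ))
    (DHq : V → (V →L[ℝ] ℝ) → 𝔤 → (V →L[ℝ] ℝ))
    (DHp : V → (V →L[ℝ] ℝ) → 𝔤 → V)
    (DHxi : V → (V →L[ℝ] ℝ) → 𝔤 → (𝔤 →L[ℝ] ℝ))
    (hDHq : ∀ q p ξ, DHq q p ξ = fderiv ℝ (fun q' => H (q', p, ξ)) q)
    (hDHp : ∀ q p ξ (w : V →L[ℝ] ℝ), fderiv ℝ (fun p' => H (q, p', ξ)) p w = w (DHp q p ξ))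
    (hDHxi : ∀ q p ξ, DHxi q p ξ = fderiv ℝ (fun ξ' => H (q, p, ξ')) ξ)
    (ha : ∀ ζ : 𝔤, Differentiable ℝ (fun q' => a q' ζ))
    -- `⟨p, ∇_v ζ_*⟩ + ⟨K̄(ζ·p), v⟩ = 0`
    (hK : ∀ (q : V) (p : V →L[ℝ] ℝ) (ζ : 𝔤) (v : V),
        p (fderiv ℝ (fun q' => a q' ζ) q v) + Kb q p ζ v = 0)
    -- infinitesimal `G`-invariance of `H` in the sense `H(g·q, g·p, ξ) = H(q, p, ξ)`
    (hinv : ∀ (q : V) (p : V →L[ℝ] ℝ) (ξ ζ : 𝔤),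
        DHq q p ξ (a q ζ) + Kb q p ζ (DHp q p ξ) = 0)
    -- equivariance identity of the momentum map
    (hJeq : ∀ (q : V) (p : V →L[ℝ] ℝ) (ξ ζ : 𝔤),
        Kb q p ζ (a q ξ) - Kb q p ξ (a q ζ) = - p (a q ⁅ζ, ξ⁆))
    -- a solution curve of the Clebsch–Hamilton equations
    (q : ℝ → V) (p : ℝ → V →L[ℝ] ℝ) (ξ : ℝ → 𝔤)
    (heq1 : ∀ t, HasDerivAt p (-(DHq (q t) (p t) (ξ t)) - Kb (q t) (p t) (ξ t)) t)
    (heq2 : ∀ t, HasDerivAt q (DHp (q t) (p t) (ξ t) - a (q t) (ξ t)) t)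
    (hconstr : ∀ (t : ℝ) (ζ : 𝔤), p t (a (q t) ζ) = DHxi (q t) (p t) (ξ t) ζ) :
    ∀ (t : ℝ) (ζ : 𝔤),
      HasDerivAt (fun s => p s (a (q s) ζ)) (p t (a (q t) ⁅ξ t, ζ⁆)) t :=
  momentum_map_euler_poincare_general a Kb DHq DHp ha hK hinv hJeq q p ξ heq1 heq2
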